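/- Let M, D, K be n×n complex matrices and X₀ an n×q matrix, and s ∈ ℂ with s²M + sD + K invertible. With E = [[I,0],[0,M]], A = [[0,I],[-K,-D]], and 𝓑 = [X₀; 0], the upper n×q block of (A - sE)⁻¹𝓑 equals -(s²M + sD + K)⁻¹(sM + D)X₀. -/

import Mathlib

/-!
Eliminating the velocity block of the first-order system `(A - sE) [Y₁; Y₂] = [X₀; 0]`:
the first row gives `Y₂ = X₀ + s Y₁`, and substituting into the second row leaves
`(s²M + sD + K) Y₁ = -(sM + D) X₀`. Equivalently, the companion pencil has an explicit
block inverse built from `P⁻¹`, where `P = K + s (sM + D)` is the quadratic pencil in Horner form.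
-/

open Matrix

variable {m R : Type*} [DecidableEq m] [CommRing R]

theorem companion_sub_smul_fromBlocks (M D K : Matrix m m R) (s : R) :
    (fromBlocks 0 1 (-K) (-D) : Matrix (m ⊕ m) (m ⊕ m) R) - s • fromBlocks 1 0 0 M =
      fromBlocks (-(s • 1)) 1 (-K) (-(s • M + D)) := by
  rw [fromBlocks_smul, sub_eq_add_neg, fromBlocks_neg, fromBlocks_add]
  simp only [smul_zero, neg_zero, zero_add, add_zero, neg_add_rev]

theorem inv_fromBlocks_companion [Fintype m] (K L : Matrix m m R) (s : R)
    (hP : IsUnit (K + s • L)) :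
    (fromBlocks (-(s • 1)) 1 (-K) (-L))⁻¹ =
      fromBlocks (-((K + s • L)⁻¹ * L)) (-(K + s • L)⁻¹) ((K + s • L)⁻¹ * K)
        (-(s • (K + s • L)⁻¹)) := by
  set P := K + s • L
  have hPinv : P⁻¹ * P = 1 := nonsing_inv_mul _ ((isUnit_iff_isUnit_det _).mp hP)
  refine inv_eq_left_inv ?_
  rw [fromBlocks_multiply, ← fromBlocks_one]
  congr 1
  · calc -(P⁻¹ * L) * -(s • 1) + -P⁻¹ * -K = P⁻¹ * (K + s • L) := by
          simp only [neg_mul_neg, mul_one, Matrix.mul_add, Matrix.mul_smul]; abel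
      _ = 1 := hPinv
  · simp
  · simp
  · calc P⁻¹ * K * 1 + -(s • P⁻¹) * -L = P⁻¹ * (K + s • L) := by
          simp only [mul_one, neg_mul_neg, Matrix.mul_add, Matrix.mul_smul, Matrix.smul_mul]
      _ = 1 := hPinv

theorem companion_position_initial_condition_block {n q : ℕ}
    (M D K : Matrix (Fin n) (Fin n) ℂ) (X₀ : Matrix (Fin n) (Fin q) ℂ) (s : ℂ)
    (hs : IsUnit (s ^ 2 • M + s • D + K)) :
    ((((fromBlocks 0 1 (-K) (-D) : Matrix (Fin n ⊕ Fin n) (Fin n ⊕ Fin n) ℂ)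
          - s • fromBlocks 1 0 0 M)⁻¹) *
        fromRows X₀ (0 : Matrix (Fin n) (Fin q) ℂ)).submatrix Sum.inl id =
      -((s ^ 2 • M + s • D + K)⁻¹ * (s • M + D) * X₀) := by
  have horner : s ^ 2 • M + s • D + K = K + s • (s • M + D) := by
    rw [smul_add, smul_smul, sq, add_comm]
  rw [horner] at hs ⊢
  rw [companion_sub_smul_fromBlocks, inv_fromBlocks_companion _ _ _ hs,
    fromBlocks_mul_fromRows, Matrix.mul_zero, add_zero, Matrix.neg_mul]
  rfl
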